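/- With A_3 as defined and P_n the n-th Legendre polynomial, for every integer n ≥ 2, ∫₀^π A_3(θ) P_n(cos θ) sin(θ) dθ ≤ 0, and for n = 1 the integral is positive. -/

import Mathlib

open Real

/-- The `n`-th Legendre polynomial, via the Rodrigues formula. -/
noncomputable def legendreP (n : ℕ) : Polynomial ℝ :=
  ((1 : ℝ) / (2^n * n.factorial)) •
    ((fun p => Polynomial.derivative p)^[n] ((Polynomial.X ^ 2 - 1) ^ n))

/-!
Put `x = cos θ`. Since `cos (θ/2) = √((1 + x)/2)` and `sin (θ/2) = √((1 - x)/2)` on `[0, π]`, the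
triple-angle formulas turn the integral into
`-(2π/3) ∫ Pₙ + π (2 + (-1)ⁿ) J(1/2, n) - (π/3) (4 + (-1)ⁿ) J(3/2, n)`,
where `J(a, n) = ∫₋₁¹ ((1 - x)/2)^a Pₙ(x) dx`; the parity of `Pₙ` turns the moments against
`((1 + x)/2)^a` into `(-1)ⁿ J(a, n)`.
From Rodrigues' formula, `(1 - x) (P'ₙ₊₁ + P'ₙ) = (n + 1) (Pₙ - Pₙ₊₁)`, and `Pₙ₊₁ + Pₙ` vanishes
at `-1`, so integrating the derivative of `((1 - x)/2)^(a+1) (Pₙ₊₁ + Pₙ)` gives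
`(n + a + 2) J(a, n + 1) = (n - a) J(a, n)`, with `J(a, 0) = 2/(a + 1)`.
Hence `∫ Pₙ = 0` for `n ≥ 1`, `J(1/2, n) < 0` for `n ≥ 1` and `J(3/2, n) > 0` for `n ≥ 2`,
which decides the sign for `n ≥ 2`; for `n = 1` the integral is `8π/105`.
-/

open Polynomial intervalIntegral

section Rodrigues

variable {R : Type*} [CommRing R]

lemma iterate_derivative_succ_mul_X (m : ℕ) (p : R[X]) :
    derivative^[m + 1] (p * X) =
      derivative^[m + 1] p * X + ((m : R[X]) + 1) * derivative^[m] p := by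
  simp [iterate_derivative_mul_X, nsmul_eq_mul]

lemma iterate_derivative_X_sq_sub_one_pow_succ (m n : ℕ) :
    derivative^[m + 1] ((X ^ 2 - 1 : R[X]) ^ (n + 1)) =
      2 * ((n : R[X]) + 1) * derivative^[m] ((X ^ 2 - 1) ^ n * X) := by
  have h : derivative ((X ^ 2 - 1 : R[X]) ^ (n + 1)) =
      C (2 * ((n : R) + 1)) * ((X ^ 2 - 1) ^ n * X) := by
    simp [derivative_pow]
    ring
  rw [Function.iterate_succ_apply, h, iterate_derivative_C_mul]
  simp [← C_ofNat]

-- Two expansions of the same derivative: one through `(X²-1)^(n+1) = (X²-1)^n X X - (X²-1)^n`,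
-- the other through `derivative ((X²-1)^(n+1))`; the term `derivative^[n] ((X²-1)^n X)` cancels.
lemma iterate_derivative_X_sq_sub_one_pow_self_succ (n : ℕ) :
    derivative^[n + 1] ((X ^ 2 - 1 : R[X]) ^ (n + 1)) =
      2 * (((n : R[X]) + 1) * X * derivative^[n] ((X ^ 2 - 1) ^ n)
        + (X ^ 2 - 1) * derivative^[n + 1] ((X ^ 2 - 1) ^ n)) := by
  have hQ : (X ^ 2 - 1 : R[X]) ^ (n + 1) = (X ^ 2 - 1) ^ n * X * X - (X ^ 2 - 1) ^ n := by
    ring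
  have h := iterate_derivative_X_sq_sub_one_pow_succ (R := R) n n
  rw [hQ, iterate_derivative_sub, iterate_derivative_succ_mul_X,
    iterate_derivative_succ_mul_X] at h ⊢
  linear_combination -h

lemma iterate_derivative_comp_neg_X (p : R[X]) (k : ℕ) :
    derivative^[k] (p.comp (-X)) = (-1) ^ k * (derivative^[k] p).comp (-X) := by
  induction k generalizing p with
  | zero => simp
  | succ k ih => simp [ih (derivative p), derivative_comp, pow_succ]

end Rodrigues

lemma legendreP_zero : legendreP 0 = 1 := by simp [legendreP]

lemma legendreP_eq_C_mul (n : ℕ) :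
    legendreP n = C (2 ^ n * n.factorial : ℝ)⁻¹ * derivative^[n] ((X ^ 2 - 1) ^ n) := by
  rw [legendreP, smul_eq_C_mul, one_div]

lemma derivative_legendreP_eq_C_mul (n : ℕ) :
    derivative (legendreP n) =
      C (2 ^ n * n.factorial : ℝ)⁻¹ * derivative^[n + 1] ((X ^ 2 - 1) ^ n) := by
  rw [legendreP_eq_C_mul, derivative_C_mul, Function.iterate_succ_apply']

lemma C_inv_two_pow_mul_factorial_eq (n : ℕ) :
    C (2 ^ n * n.factorial : ℝ)⁻¹ =
      2 * ((n : ℝ[X]) + 1) * C (2 ^ (n + 1) * (n + 1).factorial : ℝ)⁻¹ := by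
  rw [← C_ofNat, ← C_eq_natCast, ← C_1, ← C_add, ← C_mul, ← C_mul]
  congr 1
  rw [Nat.factorial_succ]
  push_cast
  field_simp
  ring

theorem derivative_legendreP_succ (n : ℕ) :
    derivative (legendreP (n + 1)) =
      X * derivative (legendreP n) + ((n : ℝ[X]) + 1) * legendreP n := by
  rw [derivative_legendreP_eq_C_mul, derivative_legendreP_eq_C_mul, legendreP_eq_C_mul,
    iterate_derivative_X_sq_sub_one_pow_succ, iterate_derivative_succ_mul_X,
    C_inv_two_pow_mul_factorial_eq n]
  ring

theorem X_sq_sub_one_mul_derivative_legendreP (n : ℕ) :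
    (X ^ 2 - 1) * derivative (legendreP n) =
      ((n : ℝ[X]) + 1) * (legendreP (n + 1) - X * legendreP n) := by
  rw [derivative_legendreP_eq_C_mul, legendreP_eq_C_mul, legendreP_eq_C_mul,
    iterate_derivative_X_sq_sub_one_pow_self_succ, C_inv_two_pow_mul_factorial_eq n]
  ring

theorem one_sub_X_mul_derivative_legendreP_succ_add (n : ℕ) :
    (1 - X) * (derivative (legendreP (n + 1)) + derivative (legendreP n)) =
      ((n : ℝ[X]) + 1) * (legendreP n - legendreP (n + 1)) := by
  linear_combination (1 - X) * derivative_legendreP_succ n - X_sq_sub_one_mul_derivative_legendreP n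

theorem legendreP_comp_neg_X (n : ℕ) : (legendreP n).comp (-X) = (-1) ^ n * legendreP n := by
  have h := iterate_derivative_comp_neg_X ((X ^ 2 - 1 : ℝ[X]) ^ n) n
  simp only [sub_comp, pow_comp, neg_sq, X_comp, one_comp] at h
  have hsq : ((-1 : ℝ[X]) ^ n) ^ 2 = 1 := by rw [← pow_mul, mul_comm, pow_mul]; simp
  rw [legendreP_eq_C_mul, mul_comp, C_comp]
  linear_combination -(C (2 ^ n * n.factorial : ℝ)⁻¹ * (-1) ^ n) * h
    - C (2 ^ n * n.factorial : ℝ)⁻¹ * (derivative^[n] ((X ^ 2 - 1) ^ n)).comp (-X) * hsq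

theorem eval_neg_one_legendreP_succ_add (n : ℕ) :
    (legendreP (n + 1)).eval (-1) + (legendreP n).eval (-1) = 0 := by
  have h := congrArg (eval (-1)) (X_sq_sub_one_mul_derivative_legendreP n)
  simp only [eval_mul, eval_sub, eval_pow, eval_X, eval_one, eval_add, eval_natCast] at h
  norm_num at h
  exact h.resolve_left n.cast_add_one_ne_zero

noncomputable def legendreMoment (a : ℝ) (n : ℕ) : ℝ :=
  ∫ x in (-1 : ℝ)..1, ((1 - x) / 2) ^ a * (legendreP n).eval x

lemma continuous_half_one_sub_rpow {a : ℝ} (ha : 0 ≤ a) :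
    Continuous fun x : ℝ => ((1 - x) / 2) ^ a :=
  (by fun_prop : Continuous fun x : ℝ => (1 - x) / 2).rpow_const fun _ => Or.inr ha

lemma hasDerivAt_half_one_sub_rpow (a : ℝ) {x : ℝ} (hx : x < 1) :
    HasDerivAt (fun y => ((1 - y) / 2) ^ (a + 1)) (-((a + 1) / 2) * ((1 - x) / 2) ^ a) x := by
  have h := (((hasDerivAt_id' x).const_sub 1).div_const 2).rpow_const (p := a + 1)
    (Or.inl (by linarith))
  rw [add_sub_cancel_right] at h
  exact h.congr_deriv (by ring)

theorem legendreMoment_zero {a : ℝ} (ha : 0 ≤ a) : legendreMoment a 0 = 2 / (a + 1) := by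
  have hderiv : ∀ x ∈ Set.Ioo (-1 : ℝ) 1,
      HasDerivAt (fun y => -(2 / (a + 1)) * ((1 - y) / 2) ^ (a + 1)) (((1 - x) / 2) ^ a) x := by
    intro x hx
    refine ((hasDerivAt_half_one_sub_rpow a hx.2).const_mul (-(2 / (a + 1)))).congr_deriv ?_
    field_simp
  rw [legendreMoment, legendreP_zero]
  simp only [eval_one, mul_one]
  rw [integral_eq_sub_of_hasDerivAt_of_le (by norm_num)
    ((continuous_const.mul (continuous_half_one_sub_rpow (by linarith))).continuousOn) hderiv
    ((continuous_half_one_sub_rpow ha).intervalIntegrable _ _)]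
  norm_num [zero_rpow (by linarith : a + 1 ≠ 0)]

lemma intervalIntegrable_half_one_sub_rpow_mul_legendreP {a : ℝ} (ha : 0 ≤ a) (n : ℕ) :
    IntervalIntegrable (fun x => ((1 - x) / 2) ^ a * (legendreP n).eval x) MeasureTheory.volume
      (-1) 1 :=
  ((continuous_half_one_sub_rpow ha).mul (legendreP n).continuous).intervalIntegrable _ _

theorem legendreMoment_succ {a : ℝ} (ha : 0 ≤ a) (n : ℕ) :
    (n + a + 2) * legendreMoment a (n + 1) = (n - a) * legendreMoment a n := by
  have hderiv : ∀ x ∈ Set.Ioo (-1 : ℝ) 1,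
      HasDerivAt
        (fun y => ((1 - y) / 2) ^ (a + 1) * ((legendreP (n + 1)).eval y + (legendreP n).eval y))
        ((n - a) / 2 * (((1 - x) / 2) ^ a * (legendreP n).eval x)
          - (n + a + 2) / 2 * (((1 - x) / 2) ^ a * (legendreP (n + 1)).eval x)) x := by
    intro x hx
    have hP := congrArg (eval x) (one_sub_X_mul_derivative_legendreP_succ_add n)
    simp only [eval_mul, eval_sub, eval_add, eval_one, eval_X, eval_natCast] at hP
    have hpow : ((1 - x) / 2) ^ (a + 1) = ((1 - x) / 2) ^ a * ((1 - x) / 2) :=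
      rpow_add_one (by linarith [hx.2]) a
    refine ((hasDerivAt_half_one_sub_rpow a hx.2).mul
      (((legendreP (n + 1)).hasDerivAt x).add ((legendreP n).hasDerivAt x))).congr_deriv ?_
    rw [hpow, Pi.add_apply]
    linear_combination ((1 - x) / 2) ^ a / 2 * hP
  have hcont : Continuous
      fun y => ((1 - y) / 2) ^ (a + 1) * ((legendreP (n + 1)).eval y + (legendreP n).eval y) :=
    (continuous_half_one_sub_rpow (by linarith)).mul
      ((legendreP (n + 1)).continuous.add (legendreP n).continuous)
  have h := integral_eq_sub_of_hasDerivAt_of_le (by norm_num) hcont.continuousOn hderiv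
    (((intervalIntegrable_half_one_sub_rpow_mul_legendreP ha n).const_mul _).sub
      ((intervalIntegrable_half_one_sub_rpow_mul_legendreP ha (n + 1)).const_mul _))
  rw [integral_sub ((intervalIntegrable_half_one_sub_rpow_mul_legendreP ha n).const_mul _)
      ((intervalIntegrable_half_one_sub_rpow_mul_legendreP ha (n + 1)).const_mul _),
    integral_const_mul, integral_const_mul, eval_neg_one_legendreP_succ_add] at h
  norm_num [zero_rpow (by linarith : a + 1 ≠ 0)] at h
  rw [legendreMoment, legendreMoment]
  linarith

theorem legendreMoment_one {a : ℝ} (ha : 0 ≤ a) :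
    legendreMoment a 1 = -(2 * a) / ((a + 1) * (a + 2)) := by
  have h := legendreMoment_succ ha 0
  rw [legendreMoment_zero ha] at h
  push_cast at h
  rw [eq_div_iff (by positivity)]
  field_simp at h
  linear_combination h

theorem legendreMoment_two {a : ℝ} (ha : 0 ≤ a) :
    legendreMoment a 2 = 2 * a * (a - 1) / ((a + 1) * (a + 2) * (a + 3)) := by
  have h := legendreMoment_succ ha 1
  rw [legendreMoment_one ha] at h
  push_cast at h
  rw [eq_div_iff (by positivity)]
  field_simp at h
  linear_combination h

theorem integral_legendreP_eq_zero {n : ℕ} (hn : n ≠ 0) :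
    ∫ x in (-1 : ℝ)..1, (legendreP n).eval x = 0 := by
  have hmoment : ∀ n, ∫ x in (-1 : ℝ)..1, (legendreP n).eval x = legendreMoment 0 n := by
    simp [legendreMoment]
  rw [hmoment]
  induction n, Nat.one_le_iff_ne_zero.mpr hn using Nat.le_induction with
  | base => simp [legendreMoment_one]
  | succ n hn ih =>
    have hrec := legendreMoment_succ le_rfl n
    rw [ih (by omega), mul_zero] at hrec
    exact (mul_eq_zero.mp hrec).resolve_left (by positivity)

theorem exists_pos_legendreMoment_eq_mul {a : ℝ} (ha : 0 ≤ a) {m n : ℕ} (ham : a < m)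
    (hmn : m ≤ n) : ∃ c > 0, legendreMoment a n = c * legendreMoment a m := by
  induction n, hmn using Nat.le_induction with
  | base => exact ⟨1, one_pos, (one_mul _).symm⟩
  | succ n hmn ih =>
    obtain ⟨c, hc, hn⟩ := ih
    have hna : a < n := ham.trans_le (by exact_mod_cast hmn)
    refine ⟨(n - a) / (n + a + 2) * c, by have := sub_pos.mpr hna; positivity, ?_⟩
    have hrec := legendreMoment_succ ha n
    rw [hn] at hrec
    field_simp
    linear_combination hrec

theorem integral_half_one_add_rpow_mul_legendreP (a : ℝ) (n : ℕ) :
    ∫ x in (-1 : ℝ)..1, ((1 + x) / 2) ^ a * (legendreP n).eval x =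
      (-1) ^ n * legendreMoment a n := by
  have hparity (x : ℝ) : (legendreP n).eval (-x) = (-1) ^ n * (legendreP n).eval x := by
    simpa using congrArg (eval x) (legendreP_comp_neg_X n)
  calc ∫ x in (-1 : ℝ)..1, ((1 + x) / 2) ^ a * (legendreP n).eval x
      = ∫ x in (-1 : ℝ)..1, ((1 + -x) / 2) ^ a * (legendreP n).eval (-x) := by
        rw [integral_comp_neg (fun x => ((1 + x) / 2) ^ a * (legendreP n).eval x), neg_neg]
    _ = ∫ x in (-1 : ℝ)..1, (-1) ^ n * (((1 - x) / 2) ^ a * (legendreP n).eval x) := by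
        simp only [hparity, ← sub_eq_add_neg]
        ring_nf
    _ = (-1) ^ n * legendreMoment a n := integral_const_mul _ _

theorem integral_comp_cos_mul_sin {f : ℝ → ℝ} (hf : Continuous f) :
    ∫ θ in (0 : ℝ)..π, f (cos θ) * sin θ = ∫ x in (-1 : ℝ)..1, f x := by
  have h := integral_comp_mul_deriv (fun θ _ => hasDerivAt_cos θ)
    continuous_sin.neg.continuousOn hf (a := 0) (b := π)
  simp only [Function.comp_def, mul_neg, integral_neg, cos_zero, cos_pi] at h
  rw [integral_symm (-1 : ℝ) 1] at h
  linarith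

-- `A₃` in the variable `x = cos θ`: on `[0, π]`, `cos (θ/2) = ((1 + x)/2)^(1/2)` and
-- `sin (θ/2) = ((1 - x)/2)^(1/2)`.
noncomputable def a3OfCos (x : ℝ) : ℝ :=
  -(2 * π / 3) + π * ((1 + x) / 2) ^ (1 / 2 : ℝ) - π / 3 * ((1 + x) / 2) ^ (3 / 2 : ℝ)
    + 2 * π * ((1 - x) / 2) ^ (1 / 2 : ℝ) - 4 * π / 3 * ((1 - x) / 2) ^ (3 / 2 : ℝ)

lemma rpow_three_halves_eq_sqrt_pow {x : ℝ} (hx : 0 ≤ x) : x ^ (3 / 2 : ℝ) = √x ^ 3 := by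
  rw [sqrt_eq_rpow, ← rpow_natCast, ← rpow_mul hx]
  norm_num

theorem a3OfCos_cos {θ : ℝ} (hθ : θ ∈ Set.Icc 0 π) :
    -(2 * π / 3) * (1 + sin (θ / 2) ^ 3)
        + π * ((1 / 12) * (9 * cos (θ / 2) - cos (3 * θ / 2))
             + (1 / 6) * (9 * sin (θ / 2) + sin (3 * θ / 2))) = a3OfCos (cos θ) := by
  obtain ⟨h0, hπ⟩ := hθ
  have hc : cos (θ / 2) = √((1 + cos θ) / 2) := cos_half (by linarith [pi_pos]) hπ
  have hs : sin (θ / 2) = √((1 - cos θ) / 2) := sin_half_eq_sqrt h0 (by linarith [pi_pos])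
  have hc0 : 0 ≤ (1 + cos θ) / 2 := by linarith [neg_one_le_cos θ]
  have hs0 : 0 ≤ (1 - cos θ) / 2 := by linarith [cos_le_one θ]
  rw [a3OfCos, ← sqrt_eq_rpow, ← sqrt_eq_rpow, rpow_three_halves_eq_sqrt_pow hc0,
    rpow_three_halves_eq_sqrt_pow hs0, ← hc, ← hs, show 3 * θ / 2 = 3 * (θ / 2) by ring,
    cos_three_mul, sin_three_mul]
  ring

lemma continuous_a3OfCos : Continuous a3OfCos := by
  unfold a3OfCos
  fun_prop (disch := norm_num)

theorem integral_a3OfCos_mul_legendreP (n : ℕ) :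
    ∫ x in (-1 : ℝ)..1, a3OfCos x * (legendreP n).eval x =
      -(2 * π / 3) * (∫ x in (-1 : ℝ)..1, (legendreP n).eval x)
        + π * (2 + (-1) ^ n) * legendreMoment (1 / 2) n
        - π / 3 * (4 + (-1) ^ n) * legendreMoment (3 / 2) n := by
  have hJ (a : ℝ) :
      ∫ x in (-1 : ℝ)..1, ((1 - x) / 2) ^ a * (legendreP n).eval x = legendreMoment a n := rfl
  simp only [a3OfCos, add_mul, sub_mul, mul_assoc]
  rw [integral_sub, integral_add, integral_sub, integral_add]
  · simp only [integral_const_mul, integral_half_one_add_rpow_mul_legendreP, hJ]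
    ring
  all_goals exact Continuous.intervalIntegrable (by fun_prop (disch := norm_num)) _ _

theorem stmt_10 (A3 : ℝ → ℝ)
    (hA3 : ∀ θ ∈ Set.Icc (0:ℝ) π,
      A3 θ = -(2*π/3) * (1 + Real.sin (θ/2) ^ 3)
        + π * ((1/12) * (9 * Real.cos (θ/2) - Real.cos (3*θ/2))
             + (1/6) * (9 * Real.sin (θ/2) + Real.sin (3*θ/2)))) :
    (∀ n : ℕ, 2 ≤ n →
      (∫ θ in (0:ℝ)..π, A3 θ * (legendreP n).eval (Real.cos θ) * Real.sin θ) ≤ 0) ∧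
    0 < ∫ θ in (0:ℝ)..π, A3 θ * (legendreP 1).eval (Real.cos θ) * Real.sin θ := by
  have hI (n : ℕ) : ∫ θ in (0:ℝ)..π, A3 θ * (legendreP n).eval (Real.cos θ) * Real.sin θ =
      -(2 * π / 3) * (∫ x in (-1 : ℝ)..1, (legendreP n).eval x)
        + π * (2 + (-1) ^ n) * legendreMoment (1 / 2) n
        - π / 3 * (4 + (-1) ^ n) * legendreMoment (3 / 2) n := by
    rw [← integral_a3OfCos_mul_legendreP,
      ← integral_comp_cos_mul_sin (f := fun x => a3OfCos x * (legendreP n).eval x)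
        (continuous_a3OfCos.mul (legendreP n).continuous)]
    refine integral_congr fun θ hθ => ?_
    rw [Set.uIcc_of_le pi_pos.le] at hθ
    simp only [hA3 θ hθ, a3OfCos_cos hθ]
  refine ⟨fun n hn => ?_, ?_⟩
  · obtain ⟨c, hc, h1⟩ := exists_pos_legendreMoment_eq_mul (a := 1 / 2) (m := 1) (n := n)
      (by norm_num) (by norm_num) (by omega)
    obtain ⟨d, hd, h3⟩ := exists_pos_legendreMoment_eq_mul (a := 3 / 2) (m := 2) (n := n)
      (by norm_num) (by norm_num) hn
    rw [legendreMoment_one (by norm_num)] at h1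
    rw [legendreMoment_two (by norm_num)] at h3
    rcases neg_one_pow_eq_or ℝ n with h | h <;>
      rw [hI, h, integral_legendreP_eq_zero (by omega), h1, h3] <;> nlinarith [pi_pos]
  · rw [hI, integral_legendreP_eq_zero one_ne_zero, legendreMoment_one (by norm_num),
      legendreMoment_one (by norm_num)]
    nlinarith [pi_pos]
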